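/- arXiv:1110.2831 — 4 statements merged into one kernel-verified Lean document; each statement's English description precedes it below -/
import Mathlib

section
/- For all A, B ∈ ℝ, the function g_{A,B} is twice differentiable at every x ≠ a and satisfies the ordinary differential equation (σ²/2)·g_{A,B}''(x) + μ·g_{A,B}'(x) + h'(x) = 0 for every x ∈ ℝ with x ≠ a. -/
open MeasureTheory Set Filter Topology

noncomputable def gfun (μ σ a : ℝ) (h : ℝ → ℝ) (A B x : ℝ) : ℝ :=
  A - B * Real.exp (-(2 * μ / σ ^ 2) * (x - a)) -
    (2 * μ / σ ^ 2) / μ * ∫ y in a..x, h y * Real.exp (-(2 * μ / σ ^ 2) * (x - y))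

noncomputable def F1 (μ σ a : ℝ) (h : ℝ → ℝ) (B x : ℝ) : ℝ :=
  B - 1 / μ * ∫ y in a..x, deriv h y * Real.exp ((2 * μ / σ ^ 2) * (y - a))

noncomputable def Bbar (μ σ a : ℝ) (h : ℝ → ℝ) : ℝ :=
  -(1 / μ) * ∫ y in Set.Iic a, deriv h y * Real.exp ((2 * μ / σ ^ 2) * (y - a))

/-!
With `Φ x = ∫ y in a..x, h y * exp (-λ (x - y)) = exp (-λ x) * ∫ y in a..x, h y * exp (λ y)`, the
fundamental theorem of calculus gives `Φ' = h - λ Φ`, since `h` is continuous. Hence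
`g' = λ B exp (-λ (x - a)) - (λ/μ) (h - λ Φ)` on all of `ℝ`, and differentiating once more where `h`
is differentiable, `g'' = -λ g' - (λ/μ) h'`. Multiplying by `σ²/2 = μ/λ` gives the equation.
-/

noncomputable def expKernelIntegral (f : ℝ → ℝ) (c a x : ℝ) : ℝ :=
  ∫ y in a..x, f y * Real.exp (-c * (x - y))

noncomputable def expKernelSolution (f : ℝ → ℝ) (c k a A B x : ℝ) : ℝ :=
  A - B * Real.exp (-c * (x - a)) - k * expKernelIntegral f c a x

section

variable {f : ℝ → ℝ} {c a : ℝ}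

theorem hasDerivAt_exp_neg_mul_sub (x : ℝ) :
    HasDerivAt (fun x => Real.exp (-c * (x - a))) (Real.exp (-c * (x - a)) * -c) x := by
  simpa using (((hasDerivAt_id x).sub_const a).const_mul (-c)).exp

theorem expKernelIntegral_eq :
    expKernelIntegral f c a = fun x => Real.exp (-c * x) * ∫ y in a..x, f y * Real.exp (c * y) := by
  funext x
  rw [expKernelIntegral, ← intervalIntegral.integral_const_mul]
  congr 1 with y
  rw [mul_left_comm, ← Real.exp_add]
  ring_nf

theorem hasDerivAt_expKernelIntegral (hf : Continuous f) (x : ℝ) :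
    HasDerivAt (expKernelIntegral f c a) (f x - c * expKernelIntegral f c a x) x := by
  have hcont : Continuous fun y => f y * Real.exp (c * y) := by fun_prop
  have hI : HasDerivAt (fun x => ∫ y in a..x, f y * Real.exp (c * y)) (f x * Real.exp (c * x)) x :=
    intervalIntegral.integral_hasDerivAt_right (hcont.intervalIntegrable a x)
      hcont.aestronglyMeasurable.stronglyMeasurableAtFilter hcont.continuousAt
  have hE : HasDerivAt (fun x => Real.exp (-c * x)) (Real.exp (-c * x) * -c) x := by
    simpa using ((hasDerivAt_id x).const_mul (-c)).exp
  rw [expKernelIntegral_eq]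
  refine (hE.mul hI).congr_deriv ?_
  have : Real.exp (-c * x) * Real.exp (c * x) = 1 := by rw [← Real.exp_add]; simp
  linear_combination f x * this

variable {k A B : ℝ}

theorem hasDerivAt_expKernelSolution (hf : Continuous f) (x : ℝ) :
    HasDerivAt (expKernelSolution f c k a A B)
      (c * B * Real.exp (-c * (x - a)) - k * (f x - c * expKernelIntegral f c a x)) x := by
  refine ((((hasDerivAt_exp_neg_mul_sub x).const_mul B).const_sub A).sub
    ((hasDerivAt_expKernelIntegral hf x).const_mul k)).congr_deriv ?_
  ring

theorem deriv_expKernelSolution (hf : Continuous f) :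
    deriv (expKernelSolution f c k a A B) = fun x =>
      c * B * Real.exp (-c * (x - a)) - k * (f x - c * expKernelIntegral f c a x) :=
  funext fun x => (hasDerivAt_expKernelSolution hf x).deriv

theorem hasDerivAt_deriv_expKernelSolution (hf : Continuous f) {x : ℝ}
    (hfx : DifferentiableAt ℝ f x) :
    HasDerivAt (deriv (expKernelSolution f c k a A B))
      (-c * deriv (expKernelSolution f c k a A B) x - k * deriv f x) x := by
  rw [deriv_expKernelSolution hf]
  refine (((hasDerivAt_exp_neg_mul_sub x).const_mul (c * B)).sub ((hfx.hasDerivAt.sub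
    ((hasDerivAt_expKernelIntegral hf x).const_mul c)).const_mul k)).congr_deriv ?_
  ring

end

theorem gfun_eq_expKernelSolution (μ σ a : ℝ) (h : ℝ → ℝ) (A B : ℝ) :
    gfun μ σ a h A B = expKernelSolution h (2 * μ / σ ^ 2) (2 * μ / σ ^ 2 / μ) a A B :=
  rfl

theorem stmt0_general (μ σ a : ℝ) (h : ℝ → ℝ)
    (hμ : 0 < μ) (hσ : 0 < σ)
    (hcont : Continuous h)
    (hC2 : ∀ x : ℝ, x ≠ a → ContDiffAt ℝ 2 h x)
    :
    ∀ A B : ℝ, ∀ x : ℝ, x ≠ a →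
      DifferentiableAt ℝ (gfun μ σ a h A B) x ∧
      DifferentiableAt ℝ (deriv (gfun μ σ a h A B)) x ∧
      σ ^ 2 / 2 * deriv (deriv (gfun μ σ a h A B)) x +
        μ * deriv (gfun μ σ a h A B) x + deriv h x = 0 := by
  intro A B x hx
  have hhx : DifferentiableAt ℝ h x := (hC2 x hx).differentiableAt (by norm_num)
  rw [gfun_eq_expKernelSolution]
  have hD := hasDerivAt_deriv_expKernelSolution (c := 2 * μ / σ ^ 2) (k := 2 * μ / σ ^ 2 / μ)
    (a := a) (A := A) (B := B) hcont hhx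
  refine ⟨(hasDerivAt_expKernelSolution hcont x).differentiableAt, hD.differentiableAt, ?_⟩
  rw [hD.deriv]
  field_simp
  ring

theorem stmt0 (μ σ a : ℝ) (h : ℝ → ℝ)
    (hμ : 0 < μ) (hσ : 0 < σ)
    (hconv : ConvexOn ℝ Set.univ h)
    (hcont : Continuous h)
    (hnonneg : ∀ x, 0 ≤ h x)
    (ha : h a = 0)
    (hC2 : ∀ x : ℝ, x ≠ a → ContDiffAt ℝ 2 h x)
    (hneg : ∀ x, x < a → deriv h x < 0)
    (hpos : ∀ x, a < x → 0 < deriv h x)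
    (hint : IntegrableOn (fun y => |deriv h y| * Real.exp ((2 * μ / σ ^ 2) * (y - a))) (Set.Iic a))
    :
    ∀ A B : ℝ, ∀ x : ℝ, x ≠ a →
      DifferentiableAt ℝ (gfun μ σ a h A B) x ∧
      DifferentiableAt ℝ (deriv (gfun μ σ a h A B)) x ∧
      σ ^ 2 / 2 * deriv (deriv (gfun μ σ a h A B)) x +
        μ * deriv (gfun μ σ a h A B) x + deriv h x = 0 :=
  stmt0_general μ σ a h hμ hσ hcont hC2
end

section
/- For each B ∈ (0, B̄): the function x ↦ F₁(B,x) is strictly increasing on (−∞,a), satisfies F₁(B,a) = B > 0, and tends to B − B̄ < 0 as x → −∞; consequently there exists a unique x₁(B) ∈ (−∞,a) with F₁(B, x₁(B)) = 0, and for every A ∈ ℝ the point x₁(B) is the unique minimizer of g_{A,B} on (−∞, a). -/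
/-!
The integrand `h'(y) e^{λ(y-a)}` of `F₁` is negative on `(-∞, a)`, so `F₁(B, ·)` is strictly
increasing there, and it tends to `B - B̄ < 0` at `-∞`; with `F₁(B, a) = B > 0` the intermediate
value theorem gives the unique zero `x₁`. Integrating by parts against `h(a) = 0` turns the derivative of `g_{A,B}` on `(-∞, a)` into `λ e^{-λ(x-a)} F₁(B, x)`, which is
negative left of `x₁` and positive right of it.
-/

open MeasureTheory Set Filter Topology

open Real

section Primitive

variable {f : ℝ → ℝ} {a : ℝ}

theorem strictAntiOn_intervalIntegral_of_neg (hf : IntegrableOn f (Iic a))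
    (hneg : ∀ x < a, f x < 0) : StrictAntiOn (fun x => ∫ y in a..x, f y) (Iio a) := by
  intro x hx y hy hxy
  have hfi : ∀ {u v : ℝ}, u ≤ a → v ≤ a → IntervalIntegrable f volume u v := fun hu hv =>
    intervalIntegrable_iff.2 (hf.mono_set fun t ht => ht.2.trans (max_le hu hv))
  have hpos : 0 < ∫ t in x..y, -f t :=
    intervalIntegral.intervalIntegral_pos_of_pos_on (hfi hx.le hy.le).neg
      (fun t ht => neg_pos.2 (hneg t (ht.2.trans hy))) hxy
  rw [intervalIntegral.integral_neg] at hpos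
  have hadd := intervalIntegral.integral_add_adjacent_intervals (hfi le_rfl hx.le) (hfi hx.le hy.le)
  dsimp only
  linarith

theorem continuousOn_intervalIntegral_Iic (hf : IntegrableOn f (Iic a)) :
    ContinuousOn (fun x => ∫ y in a..x, f y) (Iic a) := by
  intro x hx
  have hxa : x - 1 ≤ a := by linarith [mem_Iic.1 hx]
  have hsub : uIcc a (x - 1) ⊆ Iic a := by
    rw [uIcc_of_ge hxa]; exact Icc_subset_Iic_self
  refine (intervalIntegral.continuousOn_primitive_interval (hf.mono_set hsub) x ?_)
    |>.mono_of_mem_nhdsWithin ?_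
  · rw [uIcc_of_ge hxa]; exact ⟨by linarith, hx⟩
  · refine mem_of_superset (inter_mem_nhdsWithin (Iic a) (Ioi_mem_nhds (by linarith : x - 1 < x)))
      fun t ht => ?_
    rw [uIcc_of_ge hxa]; exact ⟨ht.2.le, ht.1⟩

theorem tendsto_intervalIntegral_atBot (hf : IntegrableOn f (Iic a)) :
    Tendsto (fun x => ∫ y in a..x, f y) atBot (𝓝 (-∫ y in Iic a, f y)) := by
  refine (intervalIntegral_tendsto_integral_Iic a hf tendsto_id).neg.congr fun x => ?_
  exact (intervalIntegral.integral_symm _ _).symm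

end Primitive

theorem exists_lt_eq_zero_of_tendsto_atBot {F : ℝ → ℝ} {a l : ℝ} (hF : ContinuousOn F (Iic a))
    (hlim : Tendsto F atBot (𝓝 l)) (hl : l < 0) (ha : 0 < F a) : ∃ x < a, F x = 0 := by
  obtain ⟨b, hFb, hba⟩ := ((hlim.eventually_lt_const hl).and (eventually_lt_atBot a)).exists
  obtain ⟨x, hx, hFx⟩ :=
    intermediate_value_Ioo hba.le (hF.mono Icc_subset_Iic_self) ⟨hFb, ha⟩
  exact ⟨x, hx.2, hFx⟩

theorem lt_of_hasDerivAt_of_sign_change {g g' : ℝ → ℝ} {D : Set ℝ} (hD : Convex ℝ D)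
    (hg : ∀ t ∈ D, HasDerivAt g (g' t) t) {x₀ x : ℝ} (hx₀ : x₀ ∈ D) (hx : x ∈ D) (hne : x ≠ x₀)
    (hneg : ∀ t ∈ D, t < x₀ → g' t < 0) (hpos : ∀ t ∈ D, x₀ < t → 0 < g' t) :
    g x₀ < g x := by
  have hcont : ContinuousOn g D := fun t ht => (hg t ht).continuousAt.continuousWithinAt
  rcases hne.lt_or_gt with hlt | hgt
  · have hsub : Icc x x₀ ⊆ D := hD.ordConnected.out hx hx₀
    refine strictAntiOn_of_deriv_neg (convex_Icc x x₀) (hcont.mono hsub) (fun t ht => ?_)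
      ⟨le_rfl, hlt.le⟩ ⟨hlt.le, le_rfl⟩ hlt
    rw [interior_Icc] at ht
    rw [(hg t (hsub (Ioo_subset_Icc_self ht))).deriv]
    exact hneg t (hsub (Ioo_subset_Icc_self ht)) ht.2
  · have hsub : Icc x₀ x ⊆ D := hD.ordConnected.out hx₀ hx
    refine strictMonoOn_of_deriv_pos (convex_Icc x₀ x) (hcont.mono hsub) (fun t ht => ?_)
      ⟨le_rfl, hgt.le⟩ ⟨hgt.le, le_rfl⟩ hgt
    rw [interior_Icc] at ht
    rw [(hg t (hsub (Ioo_subset_Icc_self ht))).deriv]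
    exact hpos t (hsub (Ioo_subset_Icc_self ht)) ht.1

section ExpWeight

variable {h : ℝ → ℝ} {a L : ℝ}

theorem integrableOn_deriv_mul_exp
    (hint : IntegrableOn (fun y => |deriv h y| * exp (L * (y - a))) (Iic a)) :
    IntegrableOn (fun y => deriv h y * exp (L * (y - a))) (Iic a) := by
  refine hint.mono' ((measurable_deriv h).mul (by fun_prop)).aestronglyMeasurable
    (ae_of_all _ fun y => ?_)
  simp

theorem intervalIntegral_deriv_mul_exp {x : ℝ} (hxa : x ≤ a) (hcont : ContinuousOn h (Icc x a))
    (ha : h a = 0) (hdiff : ∀ t ∈ Ioo x a, DifferentiableAt ℝ h t)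
    (hfi : IntervalIntegrable (fun y => deriv h y * exp (L * (y - a))) volume x a) :
    ∫ y in a..x, deriv h y * exp (L * (y - a)) =
      h x * exp (L * (x - a)) - L * ∫ y in a..x, h y * exp (L * (y - a)) := by
  have hexp : ∀ t, HasDerivAt (fun y => exp (L * (y - a))) (exp (L * (t - a)) * L) t := fun t =>
    (((hasDerivAt_id t).sub_const a).const_mul L).exp.congr_deriv (by simp)
  have hcont' : ContinuousOn (fun y => h y * exp (L * (y - a))) (Icc x a) :=
    hcont.mul (by fun_prop)
  have hpi := (hcont'.intervalIntegrable_of_Icc (μ := volume) hxa).const_mul L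
  have key := intervalIntegral.integral_eq_sub_of_hasDerivAt_of_le hxa hcont'
    (fun t ht => ((hdiff t ht).hasDerivAt.mul (hexp t)).congr_deriv (by ring)) (hfi.add hpi)
  rw [intervalIntegral.integral_add hfi hpi, intervalIntegral.integral_const_mul, ha, zero_mul] at key
  rw [intervalIntegral.integral_symm x, intervalIntegral.integral_symm x] at *
  linarith

end ExpWeight

section HoldingCost

variable {μ σ a : ℝ} {h : ℝ → ℝ}

theorem F1_self (B : ℝ) : F1 μ σ a h B a = B := by simp [F1]

theorem strictMonoOn_F1 (hμ : 0 < μ)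
    (hf : IntegrableOn (fun y => deriv h y * exp (2 * μ / σ ^ 2 * (y - a))) (Iic a))
    (hneg : ∀ x < a, deriv h x < 0) (B : ℝ) : StrictMonoOn (F1 μ σ a h B) (Iio a) :=
  fun x hx y hy hxy => sub_lt_sub_left (mul_lt_mul_of_pos_left
    (strictAntiOn_intervalIntegral_of_neg hf
      (fun t ht => mul_neg_of_neg_of_pos (hneg t ht) (exp_pos _)) hx hy hxy) (by positivity)) B

theorem continuousOn_F1
    (hf : IntegrableOn (fun y => deriv h y * exp (2 * μ / σ ^ 2 * (y - a))) (Iic a)) (B : ℝ) :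
    ContinuousOn (F1 μ σ a h B) (Iic a) :=
  continuousOn_const.sub (continuousOn_const.mul (continuousOn_intervalIntegral_Iic hf))

theorem tendsto_F1_atBot
    (hf : IntegrableOn (fun y => deriv h y * exp (2 * μ / σ ^ 2 * (y - a))) (Iic a)) (B : ℝ) :
    Tendsto (F1 μ σ a h B) atBot (𝓝 (B - Bbar μ σ a h)) := by
  convert ((tendsto_intervalIntegral_atBot hf).const_mul (1 / μ)).const_sub B using 2
  · rfl
  · rw [Bbar]
    ring

theorem gfun_eq (A B x : ℝ) :
    gfun μ σ a h A B x = A - exp (-(2 * μ / σ ^ 2) * (x - a)) *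
      (B + 2 * μ / σ ^ 2 / μ * ∫ y in a..x, h y * exp (2 * μ / σ ^ 2 * (y - a))) := by
  have hsplit : ∀ y, h y * exp (-(2 * μ / σ ^ 2) * (x - y)) =
      exp (-(2 * μ / σ ^ 2) * (x - a)) * (h y * exp (2 * μ / σ ^ 2 * (y - a))) := fun y => by
    rw [mul_left_comm, ← exp_add]
    ring_nf
  simp only [gfun, hsplit, intervalIntegral.integral_const_mul]
  ring

theorem hasDerivAt_gfun_of_lt (hcont : Continuous h) (ha : h a = 0)
    (hdiff : ∀ t < a, DifferentiableAt ℝ h t)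
    (hf : IntegrableOn (fun y => deriv h y * exp (2 * μ / σ ^ 2 * (y - a))) (Iic a))
    (A B : ℝ) {x : ℝ} (hx : x < a) :
    HasDerivAt (gfun μ σ a h A B)
      (2 * μ / σ ^ 2 * exp (-(2 * μ / σ ^ 2) * (x - a)) * F1 μ σ a h B x) x := by
  set L := 2 * μ / σ ^ 2
  have hp : Continuous fun y => h y * exp (L * (y - a)) := by fun_prop
  have hΦ : HasDerivAt (fun x => ∫ y in a..x, h y * exp (L * (y - a)))
      (h x * exp (L * (x - a))) x :=
    intervalIntegral.integral_hasDerivAt_right (hp.intervalIntegrable _ _)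
      (hp.stronglyMeasurableAtFilter _ _) hp.continuousAt
  have he : HasDerivAt (fun x => exp (-L * (x - a))) (exp (-L * (x - a)) * -L) x :=
    (((hasDerivAt_id x).sub_const a).const_mul (-L)).exp.congr_deriv (by simp)
  have hibp := intervalIntegral_deriv_mul_exp hx.le hcont.continuousOn ha
    (fun t ht => hdiff t ht.2)
    (hf.mono_set (by rw [uIcc_of_le hx.le]; exact Icc_subset_Iic_self)).intervalIntegrable
  rw [show gfun μ σ a h A B = _ from funext (gfun_eq A B)]
  refine ((hasDerivAt_const x A).sub (he.mul ((hΦ.const_mul (L / μ)).const_add B))).congr_deriv ?_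
  rw [F1, hibp]
  ring

end HoldingCost

theorem stmt3_general (μ σ a : ℝ) (h : ℝ → ℝ)
    (hμ : 0 < μ) (hσ : 0 < σ)
    (hcont : Continuous h)
    (ha : h a = 0)
    (hC2 : ∀ x : ℝ, x ≠ a → ContDiffAt ℝ 2 h x)
    (hneg : ∀ x, x < a → deriv h x < 0)
    (hint : IntegrableOn (fun y => |deriv h y| * Real.exp ((2 * μ / σ ^ 2) * (y - a))) (Set.Iic a))
    :
    ∀ B ∈ Set.Ioo 0 (Bbar μ σ a h),
      StrictMonoOn (F1 μ σ a h B) (Set.Iio a) ∧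
      F1 μ σ a h B a = B ∧
      Tendsto (F1 μ σ a h B) atBot (nhds (B - Bbar μ σ a h)) ∧
      B - Bbar μ σ a h < 0 ∧
      ∃ x₁ ∈ Set.Iio a, F1 μ σ a h B x₁ = 0 ∧
        (∀ x ∈ Set.Iio a, F1 μ σ a h B x = 0 → x = x₁) ∧
        ∀ A : ℝ, ∀ x ∈ Set.Iio a, x ≠ x₁ →
          gfun μ σ a h A B x₁ < gfun μ σ a h A B x := by
  intro B hB
  have hf := integrableOn_deriv_mul_exp hint
  have hmono := strictMonoOn_F1 hμ hf hneg B
  have hlim := tendsto_F1_atBot hf B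
  have hBneg : B - Bbar μ σ a h < 0 := by linarith [hB.2]
  obtain ⟨x₁, hx₁a, hx₁⟩ := exists_lt_eq_zero_of_tendsto_atBot (continuousOn_F1 hf B) hlim hBneg
    ((F1_self B).symm ▸ hB.1)
  refine ⟨hmono, F1_self B, hlim, hBneg, x₁, hx₁a, hx₁,
    fun x hx hx0 => hmono.injOn hx hx₁a (hx0.trans hx₁.symm), fun A x hx hne => ?_⟩
  have hdiff : ∀ t < a, DifferentiableAt ℝ h t := fun t ht =>
    (hC2 t ht.ne).differentiableAt (by norm_num)
  have hweight : ∀ t, 0 < 2 * μ / σ ^ 2 * exp (-(2 * μ / σ ^ 2) * (t - a)) := fun t => by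
    positivity
  refine lt_of_hasDerivAt_of_sign_change (convex_Iio a)
    (fun t ht => hasDerivAt_gfun_of_lt hcont ha hdiff hf A B ht) hx₁a hx hne
    (fun t ht htx => mul_neg_of_pos_of_neg (hweight t) (hx₁ ▸ hmono ht hx₁a htx))
    (fun t ht htx => mul_pos (hweight t) (hx₁ ▸ hmono hx₁a ht htx))

theorem stmt3 (μ σ a : ℝ) (h : ℝ → ℝ)
    (hμ : 0 < μ) (hσ : 0 < σ)
    (hconv : ConvexOn ℝ Set.univ h)
    (hcont : Continuous h)
    (hnonneg : ∀ x, 0 ≤ h x)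
    (ha : h a = 0)
    (hC2 : ∀ x : ℝ, x ≠ a → ContDiffAt ℝ 2 h x)
    (hneg : ∀ x, x < a → deriv h x < 0)
    (hpos : ∀ x, a < x → 0 < deriv h x)
    (hint : IntegrableOn (fun y => |deriv h y| * Real.exp ((2 * μ / σ ^ 2) * (y - a))) (Set.Iic a))
    :
    ∀ B ∈ Set.Ioo 0 (Bbar μ σ a h),
      StrictMonoOn (F1 μ σ a h B) (Set.Iio a) ∧
      F1 μ σ a h B a = B ∧
      Tendsto (F1 μ σ a h B) atBot (nhds (B - Bbar μ σ a h)) ∧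
      B - Bbar μ σ a h < 0 ∧
      ∃ x₁ ∈ Set.Iio a, F1 μ σ a h B x₁ = 0 ∧
        (∀ x ∈ Set.Iio a, F1 μ σ a h B x = 0 → x = x₁) ∧
        ∀ A : ℝ, ∀ x ∈ Set.Iio a, x ≠ x₁ →
          gfun μ σ a h A B x₁ < gfun μ σ a h A B x :=
  stmt3_general μ σ a h hμ hσ hcont ha hC2 hneg hint
end

section
/- For each A ∈ ℝ and each B ∈ (0, B̄), the derivative of g_{A,B} satisfies g_{A,B}'(x) < 0 for all x ∈ (−∞, x₁(B)), g_{A,B}'(x) > 0 for all x ∈ (x₁(B), x₂(B)), and g_{A,B}'(x) < 0 for all x ∈ (x₂(B), ∞). -/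
open MeasureTheory Set Filter Topology

/-!
Writing `g = A - e^{-λ(x-a)} (B + (λ/μ) ∫_a^x h(y) e^{λ(y-a)} dy)` and integrating
`∫_a^x h' e^{λ(y-a)}` by parts (using `h a = 0`) gives `g'(x) = λ e^{-λ(x-a)} F₁(B, x)`.
Since `h' < 0` left of `a` and `h' > 0` right of `a`, `F₁(B, ·)` is strictly increasing on
`(-∞, a]` and strictly decreasing on `[a, ∞)`; its zeros `x₁ < a < x₂` therefore cut the line
into the three sign intervals of `g'`. Convexity makes `h'` monotone, hence locally integrable.
-/

open Real

section

variable {h : ℝ → ℝ} {a μ σ : ℝ}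

theorem monotone_deriv_of_convexOn (hconv : ConvexOn ℝ univ h)
    (hdiff : ∀ x ≠ a, DifferentiableAt ℝ h x) (hneg : ∀ x < a, deriv h x < 0)
    (hpos : ∀ x, a < x → 0 < deriv h x) : Monotone (deriv h) := by
  intro u v huv
  rcases huv.eq_or_lt with rfl | huv
  · rfl
  -- off `a` this is convexity; at `a` itself `deriv h a` may be the junk value `0`, which still
  -- lies between the negative derivatives on the left and the positive ones on the right
  by_cases hu : DifferentiableAt ℝ h u
  · by_cases hv : DifferentiableAt ℝ h v
    · exact (hconv.deriv_le_slope trivial trivial huv hu).trans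
        (hconv.slope_le_deriv trivial trivial huv hv)
    · obtain rfl : v = a := by_contra fun hva => hv (hdiff v hva)
      rw [deriv_zero_of_not_differentiableAt hv]
      exact (hneg u huv).le
  · obtain rfl : u = a := by_contra fun hua => hu (hdiff u hua)
    rw [deriv_zero_of_not_differentiableAt hu]
    exact (hpos v huv).le

theorem hasDerivAt_exp_mul_sub (L a x : ℝ) :
    HasDerivAt (fun y => exp (L * (y - a))) (L * exp (L * (x - a))) x := by
  simpa [mul_comm] using (((hasDerivAt_id x).sub_const a).const_mul L).exp

theorem integral_deriv_mul_exp (L : ℝ) (hcont : Continuous h) (ha : h a = 0)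
    (hdiff : ∀ x ≠ a, DifferentiableAt ℝ h x) {x : ℝ}
    (hi : IntervalIntegrable (deriv h) volume a x) :
    ∫ y in a..x, deriv h y * exp (L * (y - a)) =
      h x * exp (L * (x - a)) - L * ∫ y in a..x, h y * exp (L * (y - a)) := by
  have hexp : Continuous fun y => exp (L * (y - a)) := by fun_prop
  have hparts := intervalIntegral.integral_mul_deriv_eq_deriv_mul_of_hasDerivAt
    hcont.continuousOn hexp.continuousOn
    (fun y hy => (hdiff y fun hya => by simp [hya] at hy; linarith).hasDerivAt)
    (fun y _ => hasDerivAt_exp_mul_sub L a y) hi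
    ((continuous_const.mul hexp).intervalIntegrable _ _)
  simp only [ha, zero_mul, sub_zero, mul_left_comm _ L,
    intervalIntegral.integral_const_mul] at hparts
  linarith

theorem gfun_eq_exp_mul (A B : ℝ) :
    gfun μ σ a h A B = fun x => A - exp (-(2 * μ / σ ^ 2) * (x - a)) *
      (B + 2 * μ / σ ^ 2 / μ * ∫ y in a..x, h y * exp (2 * μ / σ ^ 2 * (y - a))) := by
  funext x
  have hfactor : ∫ y in a..x, h y * exp (-(2 * μ / σ ^ 2) * (x - y)) =
      exp (-(2 * μ / σ ^ 2) * (x - a)) * ∫ y in a..x, h y * exp (2 * μ / σ ^ 2 * (y - a)) := by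
    rw [← intervalIntegral.integral_const_mul]
    congr 1 with y
    rw [mul_left_comm, ← exp_add]
    ring_nf
  rw [gfun, hfactor]
  ring

theorem hasDerivAt_gfun (hcont : Continuous h) (ha : h a = 0)
    (hdiff : ∀ x ≠ a, DifferentiableAt ℝ h x) (hmono : Monotone (deriv h)) (A B x : ℝ) :
    HasDerivAt (gfun μ σ a h A B)
      (2 * μ / σ ^ 2 * exp (-(2 * μ / σ ^ 2) * (x - a)) * F1 μ σ a h B x) x := by
  set L := 2 * μ / σ ^ 2
  have hI : HasDerivAt (fun t => ∫ y in a..t, h y * exp (L * (y - a)))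
      (h x * exp (L * (x - a))) x :=
    intervalIntegral.integral_hasDerivAt_right (Continuous.intervalIntegrable (by fun_prop) _ _)
      (Continuous.stronglyMeasurableAtFilter (by fun_prop) _ _) (by fun_prop)
  have hg := ((hasDerivAt_exp_mul_sub (-L) a x).mul
    ((hI.const_mul (L / μ)).const_add B)).const_sub A
  rw [gfun_eq_exp_mul]
  refine hg.congr_deriv ?_
  rw [F1, integral_deriv_mul_exp L hcont ha hdiff hmono.intervalIntegrable,
    show exp (L * (x - a)) = (exp (-L * (x - a)))⁻¹ by rw [← exp_neg]; ring_nf]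
  field_simp
  ring

theorem strictAntiOn_integral_Iic_of_neg {f : ℝ → ℝ}
    (hfi : ∀ u v, IntervalIntegrable f volume u v) (hneg : ∀ x < a, f x < 0) :
    StrictAntiOn (fun x => ∫ y in a..x, f y) (Iic a) := by
  intro u _ v hv huv
  have hint : 0 < ∫ y in u..v, -f y :=
    intervalIntegral.intervalIntegral_pos_of_pos_on (hfi u v).neg
      (fun y hy => neg_pos.2 (hneg y (hy.2.trans_le hv))) huv
  rw [intervalIntegral.integral_neg,
    ← intervalIntegral.integral_interval_sub_left (hfi a v) (hfi a u)] at hint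
  linarith

theorem strictMonoOn_integral_Ici_of_pos {f : ℝ → ℝ}
    (hfi : ∀ u v, IntervalIntegrable f volume u v) (hpos : ∀ x, a < x → 0 < f x) :
    StrictMonoOn (fun x => ∫ y in a..x, f y) (Ici a) := by
  intro u hu v _ huv
  have hint : 0 < ∫ y in u..v, f y :=
    intervalIntegral.intervalIntegral_pos_of_pos_on (hfi u v)
      (fun y hy => hpos y (hu.trans_lt hy.1)) huv
  rw [← intervalIntegral.integral_interval_sub_left (hfi a v) (hfi a u)] at hint
  linarith

theorem intervalIntegrable_deriv_mul_exp (hmono : Monotone (deriv h)) (L u v : ℝ) :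
    IntervalIntegrable (fun y => deriv h y * exp (L * (y - a))) volume u v :=
  hmono.intervalIntegrable.mul_continuousOn (by fun_prop)

theorem F1_strictMonoOn_Iic (hμ : 0 < μ) (hmono : Monotone (deriv h))
    (hneg : ∀ x < a, deriv h x < 0) (B : ℝ) : StrictMonoOn (F1 μ σ a h B) (Iic a) := by
  intro u hu v hv huv
  have := strictAntiOn_integral_Iic_of_neg
    (intervalIntegrable_deriv_mul_exp (a := a) hmono (2 * μ / σ ^ 2))
    (fun y hy => mul_neg_of_neg_of_pos (hneg y hy) (exp_pos _)) hu hv huv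
  simp only [F1]
  gcongr

theorem F1_strictAntiOn_Ici (hμ : 0 < μ) (hmono : Monotone (deriv h))
    (hpos : ∀ x, a < x → 0 < deriv h x) (B : ℝ) : StrictAntiOn (F1 μ σ a h B) (Ici a) := by
  intro u hu v hv huv
  have := strictMonoOn_integral_Ici_of_pos
    (intervalIntegrable_deriv_mul_exp (a := a) hmono (2 * μ / σ ^ 2))
    (fun y hy => mul_pos (hpos y hy) (exp_pos _)) hu hv huv
  simp only [F1]
  gcongr

end

theorem stmt4_general (μ σ a : ℝ) (h : ℝ → ℝ)
    (hμ : 0 < μ) (hσ : 0 < σ)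
    (hconv : ConvexOn ℝ Set.univ h)
    (hcont : Continuous h)
    (ha : h a = 0)
    (hC2 : ∀ x : ℝ, x ≠ a → ContDiffAt ℝ 2 h x)
    (hneg : ∀ x, x < a → deriv h x < 0)
    (hpos : ∀ x, a < x → 0 < deriv h x)
    (x1 x2 : ℝ → ℝ)
    (hx1 : ∀ B ∈ Set.Ioo 0 (Bbar μ σ a h), x1 B < a ∧ F1 μ σ a h B (x1 B) = 0)
    (hx2 : ∀ B : ℝ, 0 < B → a < x2 B ∧ F1 μ σ a h B (x2 B) = 0)
    :
    ∀ A : ℝ, ∀ B ∈ Set.Ioo 0 (Bbar μ σ a h),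
      (∀ x : ℝ, x < x1 B → deriv (gfun μ σ a h A B) x < 0) ∧
      (∀ x ∈ Set.Ioo (x1 B) (x2 B), 0 < deriv (gfun μ σ a h A B) x) ∧
      (∀ x : ℝ, x2 B < x → deriv (gfun μ σ a h A B) x < 0) := by
  intro A B hB
  have hdiff : ∀ x ≠ a, DifferentiableAt ℝ h x := fun x hx =>
    (hC2 x hx).differentiableAt two_ne_zero
  have hmono := monotone_deriv_of_convexOn hconv hdiff hneg hpos
  have hinc := F1_strictMonoOn_Iic (σ := σ) hμ hmono hneg B
  have hdec := F1_strictAntiOn_Ici (σ := σ) hμ hmono hpos B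
  obtain ⟨hx1a, hx1B⟩ := hx1 B hB
  obtain ⟨hx2a, hx2B⟩ := hx2 B hB.1
  have hderiv (x : ℝ) : deriv (gfun μ σ a h A B) x =
      2 * μ / σ ^ 2 * exp (-(2 * μ / σ ^ 2) * (x - a)) * F1 μ σ a h B x :=
    (hasDerivAt_gfun hcont ha hdiff hmono A B x).deriv
  have hfactor (x : ℝ) : 0 < 2 * μ / σ ^ 2 * exp (-(2 * μ / σ ^ 2) * (x - a)) := by positivity
  refine ⟨fun x hx => ?_, fun x hx => ?_, fun x hx => ?_⟩
  · rw [hderiv]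
    refine mul_neg_of_pos_of_neg (hfactor x) ?_
    rw [← hx1B]
    exact hinc (mem_Iic.2 (hx.trans hx1a).le) hx1a.le hx
  · rw [hderiv]
    refine mul_pos (hfactor x) ?_
    rcases le_or_gt x a with hxa | hxa
    · rw [← hx1B]
      exact hinc hx1a.le hxa hx.1
    · rw [← hx2B]
      exact hdec hxa.le hx2a.le hx.2
  · rw [hderiv]
    refine mul_neg_of_pos_of_neg (hfactor x) ?_
    rw [← hx2B]
    exact hdec hx2a.le (hx2a.trans hx).le hx

theorem stmt4 (μ σ a : ℝ) (h : ℝ → ℝ)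
    (hμ : 0 < μ) (hσ : 0 < σ)
    (hconv : ConvexOn ℝ Set.univ h)
    (hcont : Continuous h)
    (hnonneg : ∀ x, 0 ≤ h x)
    (ha : h a = 0)
    (hC2 : ∀ x : ℝ, x ≠ a → ContDiffAt ℝ 2 h x)
    (hneg : ∀ x, x < a → deriv h x < 0)
    (hpos : ∀ x, a < x → 0 < deriv h x)
    (hint : IntegrableOn (fun y => |deriv h y| * Real.exp ((2 * μ / σ ^ 2) * (y - a))) (Set.Iic a))
    (x1 x2 : ℝ → ℝ)
    (hx1 : ∀ B ∈ Set.Ioo 0 (Bbar μ σ a h), x1 B < a ∧ F1 μ σ a h B (x1 B) = 0)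
    (hx2 : ∀ B : ℝ, 0 < B → a < x2 B ∧ F1 μ σ a h B (x2 B) = 0)
    :
    ∀ A : ℝ, ∀ B ∈ Set.Ioo 0 (Bbar μ σ a h),
      (∀ x : ℝ, x < x1 B → deriv (gfun μ σ a h A B) x < 0) ∧
      (∀ x ∈ Set.Ioo (x1 B) (x2 B), 0 < deriv (gfun μ σ a h A B) x) ∧
      (∀ x : ℝ, x2 B < x → deriv (gfun μ σ a h A B) x < 0) :=
  stmt4_general μ σ a h hμ hσ hconv hcont ha hC2 hneg hpos x1 x2 hx1 hx2
end

section
/- As B ↓ 0, both x₁(B) → a and x₂(B) → a; as B ↑ B̄, x₁(B) → −∞, while x₂(B) converges to the finite limit x₂(B̄) ∈ (a, ∞). -/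
open MeasureTheory Set Filter Topology

noncomputable def phi (μ σ a : ℝ) (h : ℝ → ℝ) (y : ℝ) : ℝ :=
  deriv h y * Real.exp ((2 * μ / σ ^ 2) * (y - a))

noncomputable def Ifun (μ σ a : ℝ) (h : ℝ → ℝ) (x : ℝ) : ℝ :=
  ∫ y in a..x, phi μ σ a h y

lemma F1_eq (μ σ a : ℝ) (h : ℝ → ℝ) (B x : ℝ) :
    F1 μ σ a h B x = B - 1 / μ * Ifun μ σ a h x := rfl

lemma Bbar_eq (μ σ a : ℝ) (h : ℝ → ℝ) :
    Bbar μ σ a h = -(1 / μ) * ∫ y in Set.Iic a, phi μ σ a h y := rfl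

theorem stmt6 (μ σ a : ℝ) (h : ℝ → ℝ)
    (hμ : 0 < μ) (hσ : 0 < σ)
    (hconv : ConvexOn ℝ Set.univ h)
    (hcont : Continuous h)
    (hnonneg : ∀ x, 0 ≤ h x)
    (ha : h a = 0)
    (hC2 : ∀ x : ℝ, x ≠ a → ContDiffAt ℝ 2 h x)
    (hneg : ∀ x, x < a → deriv h x < 0)
    (hpos : ∀ x, a < x → 0 < deriv h x)
    (hint : IntegrableOn (fun y => |deriv h y| * Real.exp ((2 * μ / σ ^ 2) * (y - a))) (Set.Iic a))
    (x1 x2 : ℝ → ℝ)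
    (hx1 : ∀ B ∈ Set.Ioo 0 (Bbar μ σ a h), x1 B < a ∧ F1 μ σ a h B (x1 B) = 0)
    (hx2 : ∀ B : ℝ, 0 < B → a < x2 B ∧ F1 μ σ a h B (x2 B) = 0)
    :
    Tendsto x1 (nhdsWithin 0 (Set.Ioo 0 (Bbar μ σ a h))) (nhds a) ∧
    Tendsto x2 (nhdsWithin 0 (Set.Ioi 0)) (nhds a) ∧
    Tendsto x1 (nhdsWithin (Bbar μ σ a h) (Set.Ioo 0 (Bbar μ σ a h))) atBot ∧
    Tendsto x2 (nhdsWithin (Bbar μ σ a h) (Set.Iio (Bbar μ σ a h))) (nhds (x2 (Bbar μ σ a h))) ∧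
    a < x2 (Bbar μ σ a h) := by
  have hμ' : μ ≠ 0 := hμ.ne'
  have hderiva : deriv h a = 0 := by
    by_cases hd : DifferentiableAt ℝ h a
    · have hmin : IsLocalMin h a :=
        Filter.Eventually.of_forall (fun x => by rw [ha]; exact hnonneg x)
      exact hmin.deriv_eq_zero
    · exact deriv_zero_of_not_differentiableAt hd
  have hP0 : phi μ σ a h a = 0 := by simp [phi, hderiva]
  have hPneg : ∀ y, y < a → phi μ σ a h y < 0 := fun y hy =>
    mul_neg_of_neg_of_pos (hneg y hy) (Real.exp_pos _)
  have hPpos : ∀ y, a < y → 0 < phi μ σ a h y := fun y hy =>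
    mul_pos (hpos y hy) (Real.exp_pos _)
  have hPle : ∀ y, y ≤ a → phi μ σ a h y ≤ 0 := by
    intro y hy
    rcases lt_or_eq_of_le hy with h' | h'
    · exact (hPneg y h').le
    · rw [h', hP0]
  have hPge : ∀ y, a ≤ y → 0 ≤ phi μ σ a h y := by
    intro y hy
    rcases lt_or_eq_of_le hy with h' | h'
    · exact (hPpos y h').le
    · rw [← h', hP0]
  have hmeas : Measurable (phi μ σ a h) := by
    exact (measurable_deriv h).mul (Continuous.measurable (by continuity))
  have hIic : IntegrableOn (phi μ σ a h) (Set.Iic a) := by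
    have heq : (fun y => |deriv h y| * Real.exp ((2 * μ / σ ^ 2) * (y - a))) =
        fun y => ‖phi μ σ a h y‖ := by
      funext y
      rw [Real.norm_eq_abs]
      unfold phi
      rw [abs_mul, abs_of_pos (Real.exp_pos _)]
    rw [heq] at hint
    exact (integrable_norm_iff (hmeas.aestronglyMeasurable.restrict)).mp hint
  have hIIl : ∀ c d, c ≤ a → d ≤ a → IntervalIntegrable (phi μ σ a h) volume c d := by
    intro c d hc hd
    apply (hIic.mono_set ?_).intervalIntegrable
    intro z hz
    rcases Set.mem_uIcc.mp hz with ⟨_, h2⟩ | ⟨_, h2⟩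
    · exact Set.mem_Iic.mpr (h2.trans hd)
    · exact Set.mem_Iic.mpr (h2.trans hc)
  have hDge : ∀ y, a ≤ y → 0 ≤ deriv h y := by
    intro y hy
    rcases lt_or_eq_of_le hy with h' | h'
    · exact (hpos y h').le
    · rw [← h', hderiva]
  have hmonoD : MonotoneOn (deriv h) (Set.Ici a) := by
    intro x hx y hy hxy
    rcases eq_or_lt_of_le (Set.mem_Ici.mp hx) with h' | h'
    · rw [← h', hderiva]
      exact hDge y (Set.mem_Ici.mp hy)
    · rcases eq_or_lt_of_le hxy with rfl | hxy'
      · exact le_refl _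
      · have hdx : DifferentiableAt ℝ h x :=
          (hC2 x (ne_of_gt h')).differentiableAt (by norm_num)
        have hdy : DifferentiableAt ℝ h y :=
          (hC2 y (ne_of_gt (h'.trans hxy'))).differentiableAt (by norm_num)
        exact (hconv.deriv_le_slope (Set.mem_univ x) (Set.mem_univ y) hxy' hdx).trans
          (hconv.slope_le_deriv (Set.mem_univ x) (Set.mem_univ y) hxy' hdy)
  have hIIr : ∀ c d, a ≤ c → a ≤ d → IntervalIntegrable (phi μ σ a h) volume c d := by
    intro c d hc hd
    have hsub : Set.uIcc c d ⊆ Set.Ici a := by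
      intro z hz
      rcases Set.mem_uIcc.mp hz with ⟨h1, _⟩ | ⟨h1, _⟩
      · exact Set.mem_Ici.mpr (hc.trans h1)
      · exact Set.mem_Ici.mpr (hd.trans h1)
    exact ((hmonoD.mono hsub).intervalIntegrable).mul_continuousOn
      (Continuous.continuousOn (by continuity))
  have hIdec : ∀ x y, x ≤ y → y ≤ a → Ifun μ σ a h y ≤ Ifun μ σ a h x := by
    intro x y hxy hya
    have hadd := intervalIntegral.integral_add_adjacent_intervals
      (hIIl a x le_rfl (hxy.trans hya)) (hIIl x y (hxy.trans hya) hya)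
    have hnn : 0 ≤ ∫ u in x..y, -phi μ σ a h u :=
      intervalIntegral.integral_nonneg hxy (fun u hu => by
        have := hPle u (hu.2.trans hya); linarith)
    rw [intervalIntegral.integral_neg] at hnn
    unfold Ifun
    linarith
  have hIinc : ∀ x y, a ≤ x → x ≤ y → Ifun μ σ a h x ≤ Ifun μ σ a h y := by
    intro x y hax hxy
    have hadd := intervalIntegral.integral_add_adjacent_intervals
      (hIIr a x le_rfl hax) (hIIr x y hax (hax.trans hxy))
    have hnn : 0 ≤ ∫ u in x..y, phi μ σ a h u :=
      intervalIntegral.integral_nonneg hxy (fun u hu => hPge u (hax.trans hu.1))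
    unfold Ifun
    linarith
  have hIposL : ∀ x, x < a → 0 < Ifun μ σ a h x := by
    intro x hx
    have h1 : 0 < ∫ u in x..a, -phi μ σ a h u :=
      intervalIntegral.intervalIntegral_pos_of_pos_on ((hIIl x a hx.le le_rfl).neg)
        (fun u hu => by have := hPneg u hu.2; linarith) hx
    rw [intervalIntegral.integral_neg] at h1
    unfold Ifun
    rw [intervalIntegral.integral_symm x a]
    linarith
  have hIposR : ∀ x, a < x → 0 < Ifun μ σ a h x := by
    intro x hx
    have h1 : 0 < ∫ u in a..x, phi μ σ a h u :=
      intervalIntegral.intervalIntegral_pos_of_pos_on (hIIr a x le_rfl hx.le)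
        (fun u hu => hPpos u hu.1) hx
    unfold Ifun
    linarith
  have hIstrictR : ∀ t L, a < t → t < L → Ifun μ σ a h t < Ifun μ σ a h L := by
    intro t L hat htL
    have hadd := intervalIntegral.integral_add_adjacent_intervals
      (hIIr a t le_rfl hat.le) (hIIr t L hat.le (hat.trans htL).le)
    have h1 : 0 < ∫ u in t..L, phi μ σ a h u :=
      intervalIntegral.intervalIntegral_pos_of_pos_on (hIIr t L hat.le (hat.trans htL).le)
        (fun u hu => hPpos u (hat.trans hu.1)) htL
    unfold Ifun
    linarith
  have hF1zero : ∀ B x, F1 μ σ a h B x = 0 → Ifun μ σ a h x = μ * B := by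
    intro B x hF
    rw [F1_eq] at hF
    field_simp at hF
    linarith
  have hBbarkey : ∀ M, M < a → Ifun μ σ a h M < μ * Bbar μ σ a h := by
    intro M hM
    have hIicM : IntegrableOn (phi μ σ a h) (Set.Iic M) :=
      hIic.mono_set (Set.Iic_subset_Iic.mpr hM.le)
    have hIocMa : IntegrableOn (phi μ σ a h) (Set.Ioc M a) :=
      hIic.mono_set Set.Ioc_subset_Iic_self
    have hsplit : (∫ y in Set.Iic a, phi μ σ a h y)
        = (∫ y in Set.Iic M, phi μ σ a h y) + ∫ y in Set.Ioc M a, phi μ σ a h y := by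
      rw [← setIntegral_union (Set.Iic_disjoint_Ioc le_rfl) measurableSet_Ioc hIicM hIocMa,
        Set.Iic_union_Ioc_eq_Iic hM.le]
    have hIM : Ifun μ σ a h M = -∫ y in Set.Ioc M a, phi μ σ a h y := by
      unfold Ifun
      rw [intervalIntegral.integral_symm M a, intervalIntegral.integral_of_le hM.le]
    have hnegpart : (∫ y in Set.Iic M, phi μ σ a h y) < 0 := by
      have h1 : 0 < ∫ u in (M - 1)..M, -phi μ σ a h u :=
        intervalIntegral.intervalIntegral_pos_of_pos_on
          ((hIIl (M - 1) M (by linarith) hM.le).neg)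
          (fun u hu => by have := hPneg u (hu.2.trans hM); linarith) (by linarith)
      rw [intervalIntegral.integral_of_le (by linarith : M - 1 ≤ M)] at h1
      have h2 : (∫ y in Set.Ioc (M - 1) M, -phi μ σ a h y)
          ≤ ∫ y in Set.Iic M, -phi μ σ a h y := by
        apply setIntegral_mono_set hIicM.neg
        · filter_upwards [ae_restrict_mem measurableSet_Iic] with y hy
          have := hPle y (le_trans hy hM.le)
          simp only [Pi.zero_apply, Pi.neg_apply]
          linarith
        · exact HasSubset.Subset.eventuallyLE Set.Ioc_subset_Iic_self
      simp only [integral_neg] at h1 h2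
      linarith
    have hBb : μ * Bbar μ σ a h = -∫ y in Set.Iic a, phi μ σ a h y := by
      rw [Bbar_eq]
      field_simp
    rw [hIM, hBb, hsplit]
    linarith
  have hBbarpos : 0 < Bbar μ σ a h := by
    have h1 := hIposL (a - 1) (by linarith)
    have h2 := hBbarkey (a - 1) (by linarith)
    nlinarith
  refine ⟨?_, ?_, ?_, ?_, (hx2 _ hBbarpos).1⟩
  · -- x1 → a as B → 0⁺
    rw [Metric.tendsto_nhds]
    intro ε hε
    have hδ : 0 < Ifun μ σ a h (a - ε) / μ :=
      div_pos (hIposL _ (by linarith)) hμ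
    filter_upwards [eventually_mem_nhdsWithin,
      (eventually_lt_nhds hδ).filter_mono nhdsWithin_le_nhds] with B hB hBlt
    obtain ⟨hlt, hF⟩ := hx1 B hB
    have hIB := hF1zero B _ hF
    have hkey : a - ε < x1 B := by
      by_contra hc
      push_neg at hc
      have hmono := hIdec (x1 B) (a - ε) hc (by linarith)
      rw [lt_div_iff₀ hμ] at hBlt
      have hcomm : μ * B = B * μ := mul_comm _ _
      linarith
    rw [Real.dist_eq, abs_lt]
    constructor <;> linarith
  · -- x2 → a as B → 0⁺
    rw [Metric.tendsto_nhds]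
    intro ε hε
    have hδ : 0 < Ifun μ σ a h (a + ε) / μ :=
      div_pos (hIposR _ (by linarith)) hμ
    filter_upwards [eventually_mem_nhdsWithin,
      (eventually_lt_nhds hδ).filter_mono nhdsWithin_le_nhds] with B hB hBlt
    obtain ⟨hlt, hF⟩ := hx2 B hB
    have hIB := hF1zero B _ hF
    have hkey : x2 B < a + ε := by
      by_contra hc
      push_neg at hc
      have hmono := hIinc (a + ε) (x2 B) (by linarith) hc
      rw [lt_div_iff₀ hμ] at hBlt
      have hcomm : μ * B = B * μ := mul_comm _ _
      linarith
    rw [Real.dist_eq, abs_lt]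
    constructor <;> linarith
  · -- x1 → -∞ as B → Bbar⁻
    rw [tendsto_atBot]
    intro M
    have hM'a : min M (a - 1) < a := lt_of_le_of_lt (min_le_right _ _) (by linarith)
    have hkey : Ifun μ σ a h (min M (a - 1)) / μ < Bbar μ σ a h := by
      rw [div_lt_iff₀ hμ]
      have := hBbarkey _ hM'a
      have hcomm : μ * Bbar μ σ a h = Bbar μ σ a h * μ := mul_comm _ _
      linarith
    filter_upwards [eventually_mem_nhdsWithin,
      (eventually_gt_nhds hkey).filter_mono nhdsWithin_le_nhds] with B hB hBgt
    obtain ⟨hlt, hF⟩ := hx1 B hB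
    have hIB := hF1zero B _ hF
    have hx1M : x1 B < min M (a - 1) := by
      by_contra hc
      push_neg at hc
      have hmono := hIdec (min M (a - 1)) (x1 B) hc hlt.le
      rw [div_lt_iff₀ hμ] at hBgt
      have hcomm : μ * B = B * μ := mul_comm _ _
      linarith
    exact hx1M.le.trans (min_le_left _ _)
  · -- x2 continuous from the left at Bbar
    have haL : a < x2 (Bbar μ σ a h) := (hx2 _ hBbarpos).1
    have hIL : Ifun μ σ a h (x2 (Bbar μ σ a h)) = μ * Bbar μ σ a h :=
      hF1zero _ _ (hx2 _ hBbarpos).2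
    rw [Metric.tendsto_nhds]
    intro ε hε
    have hat : a < max (x2 (Bbar μ σ a h) - ε / 2) ((a + x2 (Bbar μ σ a h)) / 2) :=
      lt_of_lt_of_le (by linarith) (le_max_right _ _)
    have htL : max (x2 (Bbar μ σ a h) - ε / 2) ((a + x2 (Bbar μ σ a h)) / 2)
        < x2 (Bbar μ σ a h) := max_lt (by linarith) (by linarith)
    have hIt := hIstrictR _ _ hat htL
    have hItpos := hIposR _ hat
    have hkey : Ifun μ σ a h (max (x2 (Bbar μ σ a h) - ε / 2)
        ((a + x2 (Bbar μ σ a h)) / 2)) / μ < Bbar μ σ a h := by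
      rw [div_lt_iff₀ hμ]
      have hcomm : μ * Bbar μ σ a h = Bbar μ σ a h * μ := mul_comm _ _
      linarith
    filter_upwards [eventually_mem_nhdsWithin,
      (eventually_gt_nhds hkey).filter_mono nhdsWithin_le_nhds] with B hB hBgt
    have hBpos : 0 < B := lt_trans (div_pos hItpos hμ) hBgt
    obtain ⟨haB, hF⟩ := hx2 B hBpos
    have hIB := hF1zero B _ hF
    have hBlt : B < Bbar μ σ a h := hB
    have hub : x2 B < x2 (Bbar μ σ a h) := by
      by_contra hc
      push_neg at hc
      have hmono := hIinc (x2 (Bbar μ σ a h)) (x2 B) haL.le hc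
      nlinarith
    have hlb : max (x2 (Bbar μ σ a h) - ε / 2) ((a + x2 (Bbar μ σ a h)) / 2) < x2 B := by
      by_contra hc
      push_neg at hc
      have hmono := hIinc (x2 B) _ haB.le hc
      rw [div_lt_iff₀ hμ] at hBgt
      have hcomm : μ * B = B * μ := mul_comm _ _
      linarith
    rw [Real.dist_eq, abs_lt]
    have hmax := le_max_left (x2 (Bbar μ σ a h) - ε / 2) ((a + x2 (Bbar μ σ a h)) / 2)
    constructor <;> linarith
end
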